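/- arXiv:2207.03165 — 2 statements merged into one kernel-verified Lean document; each statement's English description precedes it below -/
import Mathlib

section
/- Let σ ∈ S_n and let l₁, l₂ be natural numbers with n ≥ l₁ ≥ l₂ ≥ 2. Then σ = C₁C₂ for some cycles C₁, C₂ in S_n of lengths l₁ and l₂ respectively if and only if either (i) n_σ = 2, the two cycles in the disjoint cycle decomposition of σ have lengths l₁ and l₂, and l₁ + l₂ = m_σ, or (ii) both of the following hold: l₁ + l₂ = m_σ + n_σ + 2s for some nonnegative integer s, and l₁ − l₂ ≤ m_σ − n_σ. -/
open Equiv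

/-- `σ ∈ S_n` is a product of `k` many `l`-cycles. -/
def IsProdOfCycles (n k l : ℕ) (σ : Equiv.Perm (Fin n)) : Prop :=
  ∃ c : Fin k → Equiv.Perm (Fin n),
    (∀ i, (c i).IsCycle ∧ (c i).support.card = l) ∧ σ = (List.ofFn c).prod

/-!
If the supports of `C₁` and `C₂` are disjoint we are in case (i). Otherwise every orbit of
`σ = C₁ * C₂` inside `supp C₁ ∪ supp C₂` meets `supp C₁ ∩ supp C₂`. So the fixed points of `σ`
there, together with one point from each nontrivial cycle of `σ`, lie in `supp C₁ ∩ supp C₂`.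
This gives `m_σ + n_σ ≤ l₁ + l₂` and `l₁ - l₂ ≤ m_σ - n_σ`, and the sign of `σ` gives the parity.

Conversely, products are assembled from three moves on cycles written as `List.formPerm`s: a
cycle splits at a point into two cycles sharing only that point, two disjoint cycles merge
through a transposition, and `C₁ * C₂ = (C₁ * swap x z) * (swap x z * C₂)` lengthens both
factors by one for suitable `x, z`. The tight case `l₁ + l₂ = m_σ + n_σ` goes by induction on
`n_σ`, merging a shortest cycle of `σ` into the longer factor; the general case then inserts
`s` points.
-/

open Equiv.Perm Finset

theorem Finset.exists_mem_notMem_mem_iff_notMem {α : Type*} {s t : Finset α} (hs : s.Nonempty)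
    (ht : t.Nonempty) (hs' : ∃ x, x ∉ s) (ht' : ∃ x, x ∉ t) :
    ∃ z ∈ s, ∃ x ∉ s, (x ∈ t ↔ z ∉ t) := by
  by_cases hts : t ⊆ s
  · obtain ⟨z, hz⟩ := ht
    obtain ⟨x, hx⟩ := hs'
    exact ⟨z, hts hz, x, hx, iff_of_false (fun h => hx (hts h)) (not_not.mpr hz)⟩
  obtain ⟨x, hxt, hxs⟩ := not_subset.mp hts
  by_cases hst : s ⊆ t
  · obtain ⟨z, hz⟩ := hs
    obtain ⟨x, hx⟩ := ht'
    exact ⟨z, hz, x, fun h => hx (hst h), iff_of_false hx (not_not.mpr (hst hz))⟩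
  obtain ⟨z, hzs, hzt⟩ := not_subset.mp hst
  exact ⟨z, hzs, x, hxs, iff_of_true hxt hzt⟩

variable {α : Type*} [DecidableEq α]

theorem List.formPerm_map_eq_mul_mul_inv (π : Equiv.Perm α) :
    ∀ l : List α, formPerm (l.map π) = π * formPerm l * π⁻¹
  | [] => by simp
  | [x] => by simp
  | x :: y :: l => by
    rw [map_cons, map_cons, formPerm_cons_cons, ← map_cons, formPerm_map_eq_mul_mul_inv π (y :: l),
      formPerm_cons_cons, Equiv.swap_apply_apply]
    group

theorem List.formPerm_cons_append (t : α) :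
    ∀ l₁ l₂ : List α, (t :: (l₁ ++ l₂)).Nodup →
      formPerm (t :: (l₁ ++ l₂)) = formPerm (t :: l₂) * formPerm (t :: l₁)
  | [], l₂, _ => by simp
  | a :: l₁, l₂, h => by
    simp only [cons_append, nodup_cons, mem_cons, mem_append, not_or] at h
    have hfix : ∀ x ∈ l₂, Equiv.swap t a x = x := fun x hx => Equiv.swap_apply_of_ne_of_ne
      (by rintro rfl; exact h.1.2.2 hx) (by rintro rfl; exact h.2.1.2 hx)
    have hmap : (t :: l₂).map (Equiv.swap t a) = a :: l₂ := by
      rw [map_cons, Equiv.swap_apply_left, map_congr_left hfix, map_id']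
    rw [cons_append, formPerm_cons_cons, formPerm_cons_append a l₁ l₂ (by simpa using h.2),
      formPerm_cons_cons t a l₁, ← hmap, formPerm_map_eq_mul_mul_inv, Equiv.swap_inv]
    simp only [← mul_assoc, Equiv.swap_mul_self, one_mul]

theorem List.card_support_formPerm [Fintype α] {l : List α} (h : l.Nodup) (hl : 2 ≤ l.length) :
    #l.formPerm.support = l.length := by
  rw [support_formPerm_of_nodup _ h (by rintro x rfl; simp at hl), toFinset_card_of_nodup h]

namespace Equiv.Perm

variable [Fintype α]

def IsProdOfTwoCycles (σ : Perm α) (l₁ l₂ : ℕ) : Prop :=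
  ∃ C₁ C₂ : Perm α, C₁.IsCycle ∧ #C₁.support = l₁ ∧ C₂.IsCycle ∧ #C₂.support = l₂ ∧ σ = C₁ * C₂

theorem IsCycle.exists_formPerm_cons {C : Perm α} (hC : C.IsCycle) {z : α}
    (hz : z ∈ C.support) :
    ∃ l : List α, (z :: l).Nodup ∧ (z :: l).toFinset = C.support ∧ (z :: l).formPerm = C := by
  obtain ⟨l, hl⟩ : ∃ l, C.toList z = z :: l := by
    obtain ⟨k, hk⟩ : ∃ k, #(C.cycleOf z).support = k + 1 :=
      Nat.exists_eq_add_one.mpr (card_pos.mpr ⟨z, mem_support_cycleOf_iff.mpr ⟨.rfl, hz⟩⟩)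
    exact ⟨_, by rw [toList, hk]; rfl⟩
  have hform : (z :: l).formPerm = C := by
    rw [← hl, formPerm_toList, hC.cycleOf_eq (mem_support.mp hz)]
  refine ⟨l, hl ▸ nodup_toList C z, ?_, hform⟩
  rw [← List.support_formPerm_of_nodup _ (hl ▸ nodup_toList C z)
    (hl ▸ toList_ne_singleton (p := C) (x := z)), hform]

section Gluing

variable {C D : Perm α} {x y z : α}

theorem IsCycle.swap_mul_of_mem_of_notMem (hD : D.IsCycle) (hz : z ∈ D.support)
    (hx : x ∉ D.support) :
    (swap x z * D).IsCycle ∧ (swap x z * D).support = insert x D.support := by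
  obtain ⟨l, hnd, hsupp, rfl⟩ := hD.exists_formPerm_cons hz
  have hnd' : (x :: z :: l).Nodup := List.nodup_cons.mpr ⟨by rwa [← List.mem_toFinset, hsupp], hnd⟩
  rw [← List.formPerm_cons_cons, List.support_formPerm_of_nodup _ hnd' (by simp),
    List.toFinset_cons, hsupp]
  exact ⟨List.isCycle_formPerm hnd' (by simp), rfl⟩

theorem IsCycle.mul_swap_of_mem_of_notMem (hD : D.IsCycle) (hz : z ∈ D.support)
    (hx : x ∉ D.support) :
    (D * swap x z).IsCycle ∧ (D * swap x z).support = insert x D.support := by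
  obtain ⟨hcyc, hsupp⟩ :=
    hD.inv.swap_mul_of_mem_of_notMem (by rwa [support_inv]) (by rwa [support_inv])
  rw [← inv_inv (D * swap x z), mul_inv_rev, swap_inv, support_inv, hsupp, support_inv]
  exact ⟨hcyc.inv, rfl⟩

theorem IsCycle.swap_mul_mul_of_disjoint (hC : C.IsCycle) (hD : D.IsCycle)
    (hCD : _root_.Disjoint C.support D.support) (hx : x ∈ C.support) (hy : y ∈ D.support) :
    (swap x y * D * C).IsCycle ∧ (swap x y * D * C).support = C.support ∪ D.support := by
  obtain ⟨l, hndC, hC, rfl⟩ := hC.exists_formPerm_cons hx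
  obtain ⟨l', hndD, hD, rfl⟩ := hD.exists_formPerm_cons hy
  have hnd : (x :: (l ++ y :: l')).Nodup := by
    rw [← List.cons_append]
    exact hndC.append hndD (List.disjoint_toFinset_iff_disjoint.mp (hC ▸ hD ▸ hCD))
  rw [← List.formPerm_cons_cons, ← List.formPerm_cons_append x l _ hnd,
    List.support_formPerm_of_nodup _ hnd (by simp), ← List.cons_append, List.toFinset_append,
    hC, hD]
  refine ⟨List.isCycle_formPerm hnd ?_, rfl⟩
  simp only [List.length_cons, List.length_append]
  omega

end Gluing

variable {σ C₁ C₂ : Perm α} {l₁ l₂ : ℕ}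

theorem IsCycle.isProdOfTwoCycles (hσ : σ.IsCycle) (h₁ : 2 ≤ l₁) (h₂ : 2 ≤ l₂)
    (hsum : #σ.support + 1 = l₁ + l₂) : σ.IsProdOfTwoCycles l₁ l₂ := by
  obtain ⟨z, hz⟩ := hσ.nonempty_support
  obtain ⟨l, hnd, hsupp, rfl⟩ := hσ.exists_formPerm_cons hz
  have hlen : l.length + 1 = l₁ + l₂ - 1 := by
    rw [← hsum, ← hsupp, List.toFinset_card_of_nodup hnd, List.length_cons, Nat.add_sub_cancel]
  rw [← l.take_append_drop (l₂ - 1)] at hnd ⊢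
  have hnd₁ : (z :: l.drop (l₂ - 1)).Nodup :=
    ((List.sublist_append_right _ _).cons_cons z).nodup hnd
  have hnd₂ : (z :: l.take (l₂ - 1)).Nodup :=
    ((List.sublist_append_left _ _).cons_cons z).nodup hnd
  have hlen₁ : (z :: l.drop (l₂ - 1)).length = l₁ := by
    rw [List.length_cons, List.length_drop]
    omega
  have hlen₂ : (z :: l.take (l₂ - 1)).length = l₂ := by
    rw [List.length_cons, List.length_take]
    omega
  refine ⟨_, _, List.isCycle_formPerm hnd₁ (by omega), ?_, List.isCycle_formPerm hnd₂ (by omega),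
    ?_, List.formPerm_cons_append z _ _ hnd⟩
  · rw [List.card_support_formPerm hnd₁ (by omega), hlen₁]
  · rw [List.card_support_formPerm hnd₂ (by omega), hlen₂]

theorem IsCycle.support_subset_of_mapsTo {c : Perm α} (hc : c.IsCycle) {s : Set α}
    (hs : Set.MapsTo c s s) {x : α} (hx : x ∈ s) (hxc : x ∈ c.support) :
    (c.support : Set α) ⊆ s := by
  intro y hy
  obtain ⟨i, rfl⟩ := hc.exists_pow_eq (mem_support.mp hxc) (mem_support.mp hy)
  exact hs.perm_pow i hx

theorem exists_mem_inter_sameCycle_mul (h₁ : C₁.IsCycle) (h₂ : C₂.IsCycle)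
    (hov : (C₁.support ∩ C₂.support).Nonempty) {x : α} (hx : x ∈ C₁.support ∪ C₂.support) :
    ∃ y ∈ C₁.support ∩ C₂.support, (C₁ * C₂).SameCycle x y := by
  by_contra! hxU
  obtain ⟨z, hz⟩ := hov
  -- `C₁ * C₂` agrees with `C₁` on `U ∩ supp C₁` and then with `C₂` on `U ∩ supp C₂`, so a
  -- nonempty piece would contain a whole support, hence `z`
  set U : Set α := {u | ∀ y ∈ C₁.support ∩ C₂.support, ¬(C₁ * C₂).SameCycle u y}
  have hσU : ∀ u ∈ U, (C₁ * C₂) u ∈ U := fun u hu y hy =>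
    sameCycle_apply_left.not.mpr (hu y hy)
  have hzU : z ∉ U := fun h => h z hz .rfl
  have hU₁ : ∀ u ∈ U, u ∉ C₁.support := by
    intro u hu hu₁
    have hmaps : Set.MapsTo C₁ {v | v ∈ U ∧ v ∈ C₁.support} {v | v ∈ U ∧ v ∈ C₁.support} := by
      rintro v ⟨hvU, hv₁⟩
      have hv₂ : v ∉ C₂.support := fun hv₂ => hvU v (mem_inter.mpr ⟨hv₁, hv₂⟩) .rfl
      have hσv : (C₁ * C₂) v = C₁ v := by rw [mul_apply, notMem_support.mp hv₂]
      exact ⟨hσv ▸ hσU v hvU, apply_mem_support.mpr hv₁⟩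
    exact hzU (h₁.support_subset_of_mapsTo hmaps ⟨hu, hu₁⟩ hu₁ (mem_inter.mp hz).1).1
  have hmaps : Set.MapsTo C₂ {v | v ∈ U ∧ v ∈ C₂.support} {v | v ∈ U ∧ v ∈ C₂.support} := by
    rintro v ⟨hvU, hv₂⟩
    have hC₂v : C₂ v ∉ C₁.support := fun h =>
      hU₁ _ (hσU v hvU) (by rw [mul_apply]; exact apply_mem_support.mpr h)
    have hσv : (C₁ * C₂) v = C₂ v := by rw [mul_apply, notMem_support.mp hC₂v]
    exact ⟨hσv ▸ hσU v hvU, apply_mem_support.mpr hv₂⟩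
  have hx₂ : x ∈ C₂.support := (mem_union.mp hx).resolve_left (hU₁ x hxU)
  exact hzU (h₂.support_subset_of_mapsTo hmaps ⟨hxU, hx₂⟩ hx₂ (mem_inter.mp hz).2).1

theorem card_cycleFactorsFinset_add_card_sdiff_support_le (h₁ : C₁.IsCycle) (h₂ : C₂.IsCycle)
    (hov : (C₁.support ∩ C₂.support).Nonempty) :
    #(C₁ * C₂).cycleFactorsFinset + #((C₁.support ∪ C₂.support) \ (C₁ * C₂).support) ≤
      #(C₁.support ∩ C₂.support) := by
  have hfix : (C₁.support ∪ C₂.support) \ (C₁ * C₂).support ⊆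
      (C₁.support ∩ C₂.support) \ (C₁ * C₂).support := by
    intro x hx
    rw [mem_sdiff] at hx ⊢
    obtain ⟨y, hy, hxy⟩ := exists_mem_inter_sameCycle_mul h₁ h₂ hov hx.1
    obtain rfl := hxy.eq_of_left (notMem_support.mp hx.2)
    exact ⟨hy, hx.2⟩
  have hfac : #(C₁ * C₂).cycleFactorsFinset ≤ #(C₁.support ∩ C₂.support ∩ (C₁ * C₂).support) := by
    refine card_le_card_of_surjOn (C₁ * C₂).cycleOf fun γ hγ => ?_
    obtain ⟨x, hx⟩ := (mem_cycleFactorsFinset_iff.mp hγ).1.nonempty_support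
    have hxσ := mem_cycleFactorsFinset_support_le hγ hx
    obtain ⟨y, hy, hxy⟩ := exists_mem_inter_sameCycle_mul h₁ h₂ hov (support_mul_le _ _ hxσ)
    exact ⟨y, mem_inter.mpr ⟨hy, hxy.mem_support_iff.mp hxσ⟩,
      by rw [← hxy.cycleOf_eq, cycle_is_cycleOf hx hγ]⟩
  calc _ ≤ #(C₁.support ∩ C₂.support ∩ (C₁ * C₂).support) +
        #((C₁.support ∩ C₂.support) \ (C₁ * C₂).support) := add_le_add hfac (card_le_card hfix)
    _ = _ := card_inter_add_card_sdiff _ _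

theorem card_support_add_card_cycleFactorsFinset_le_mul (h₁ : C₁.IsCycle) (h₂ : C₂.IsCycle)
    (hov : (C₁.support ∩ C₂.support).Nonempty) :
    #(C₁ * C₂).support + #(C₁ * C₂).cycleFactorsFinset ≤ #C₁.support + #C₂.support ∧
      #C₁.support + #(C₁ * C₂).cycleFactorsFinset ≤ #C₂.support + #(C₁ * C₂).support := by
  have hcount := card_cycleFactorsFinset_add_card_sdiff_support_le h₁ h₂ hov
  have hunion := card_union_add_card_inter C₁.support C₂.support
  have hsub : (C₁ * C₂).support ⊆ C₁.support ∪ C₂.support := support_mul_le C₁ C₂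
  have hfix := card_sdiff_add_card_eq_card hsub
  have hinter := card_le_card (inter_subset_right : C₁.support ∩ C₂.support ⊆ C₂.support)
  omega

theorem support_union_subset_support_mul (h₁ : C₁.IsCycle) (h₂ : C₂.IsCycle)
    (hov : (C₁.support ∩ C₂.support).Nonempty)
    (hsum : #C₁.support + #C₂.support = #(C₁ * C₂).support + #(C₁ * C₂).cycleFactorsFinset) :
    C₁.support ∪ C₂.support ⊆ (C₁ * C₂).support := by
  have hcount := card_cycleFactorsFinset_add_card_sdiff_support_le h₁ h₂ hov
  have hunion := card_union_add_card_inter C₁.support C₂.support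
  have hsub : (C₁ * C₂).support ⊆ C₁.support ∪ C₂.support := support_mul_le C₁ C₂
  have hfix := card_sdiff_add_card_eq_card hsub
  rw [← sdiff_eq_empty_iff_subset, ← card_eq_zero]
  omega

theorem even_card_support_add_card_cycleFactorsFinset_add (h₁ : C₁.IsCycle) (h₂ : C₂.IsCycle) :
    Even (#(C₁ * C₂).support + #(C₁ * C₂).cycleFactorsFinset + (#C₁.support + #C₂.support)) := by
  have hσsign : sign (C₁ * C₂) = (-1) ^ (#(C₁ * C₂).support + #(C₁ * C₂).cycleFactorsFinset) := by
    rw [sign_of_cycleType, sum_cycleType, cycleType_def, Multiset.card_map]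
    rfl
  have hCsign : sign (C₁ * C₂) = (-1) ^ (#C₁.support + #C₂.support) := by
    rw [sign_mul, h₁.sign, h₂.sign, neg_mul_neg, pow_add]
  rw [← neg_one_pow_eq_one_iff_even (by decide : (-1 : ℤˣ) ≠ 1), pow_add, ← hσsign, ← hCsign,
    Int.units_mul_self]

theorem card_cycleFactorsFinset_mul_le_card_support {k : ℕ}
    (h : ∀ γ ∈ σ.cycleFactorsFinset, k ≤ #γ.support) : #σ.cycleFactorsFinset * k ≤ #σ.support := by
  rw [← smul_eq_mul, ← sum_cycleType, cycleType_def]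
  exact card_nsmul_le_sum _ _ _ h

theorem eq_mul_of_card_cycleFactorsFinset_eq_two {a b : Perm α}
    (h : #σ.cycleFactorsFinset = 2) (ha : a ∈ σ.cycleFactorsFinset)
    (hb : b ∈ σ.cycleFactorsFinset) (hab : a ≠ b) : σ = a * b := by
  have hpair : σ.cycleFactorsFinset = {a, b} :=
    (eq_of_subset_of_card_le (insert_subset ha (singleton_subset_iff.mpr hb))
      (by rw [h, card_pair hab])).symm
  have hrest : (σ * a⁻¹).cycleFactorsFinset = {b} := by
    rw [cycleFactorsFinset_mul_inv_mem_eq_sdiff ha, hpair,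
      insert_sdiff_of_mem _ (mem_singleton_self a),
      sdiff_eq_self_of_disjoint (disjoint_singleton.mpr hab.symm)]
  rw [(cycleFactorsFinset_mem_commute σ ha hb hab).eq,
    ← (cycleFactorsFinset_eq_singleton_iff.mp hrest).2, inv_mul_cancel_right]

theorem exists_eq_mul_of_card_cycleFactorsFinset_eq_two (h : #σ.cycleFactorsFinset = 2) :
    ∃ a ∈ σ.cycleFactorsFinset, ∃ b ∈ σ.cycleFactorsFinset,
      a.IsCycle ∧ b.IsCycle ∧ a.Disjoint b ∧ σ = a * b := by
  obtain ⟨a, b, hab, hpair⟩ := card_eq_two.mp h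
  have ha : a ∈ σ.cycleFactorsFinset := hpair ▸ mem_insert_self a {b}
  have hb : b ∈ σ.cycleFactorsFinset := hpair ▸ mem_insert_of_mem (mem_singleton_self b)
  exact ⟨a, ha, b, hb, (mem_cycleFactorsFinset_iff.mp ha).1, (mem_cycleFactorsFinset_iff.mp hb).1,
    cycleFactorsFinset_pairwise_disjoint σ ha hb hab,
    eq_mul_of_card_cycleFactorsFinset_eq_two h ha hb hab⟩

theorem IsProdOfTwoCycles.symm (h : σ.IsProdOfTwoCycles l₁ l₂) : σ.IsProdOfTwoCycles l₂ l₁ := by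
  obtain ⟨C₁, C₂, h₁, hl₁, h₂, hl₂, rfl⟩ := h
  exact ⟨C₁ * C₂ * C₁⁻¹, C₁, h₂.conj, by rw [card_support_conj, hl₂], h₁, hl₁, by group⟩

theorem IsProdOfTwoCycles.add_one (h : σ.IsProdOfTwoCycles l₁ l₂) (h₁ : l₁ < Fintype.card α)
    (h₂ : l₂ < Fintype.card α) : σ.IsProdOfTwoCycles (l₁ + 1) (l₂ + 1) := by
  obtain ⟨C₁, C₂, hC₁, rfl, hC₂, rfl, rfl⟩ := h
  have hout : ∀ s : Finset α, #s < Fintype.card α → ∃ x, x ∉ s := fun s hs =>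
    (exists_mem_notMem_of_card_lt_card (hs.trans_eq card_univ.symm)).imp fun _ => And.right
  obtain ⟨z, hz, x, hx, hxz⟩ := exists_mem_notMem_mem_iff_notMem hC₁.nonempty_support
    hC₂.nonempty_support (hout _ h₁) (hout _ h₂)
  obtain ⟨hD₁, hD₁s⟩ := hC₁.mul_swap_of_mem_of_notMem hz hx
  have hD₂ : (swap x z * C₂).IsCycle ∧ #(swap x z * C₂).support = #C₂.support + 1 := by
    by_cases hz₂ : z ∈ C₂.support
    · have hx₂ : x ∉ C₂.support := fun hx₂ => hxz.mp hx₂ hz₂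
      obtain ⟨hc, hs⟩ := hC₂.swap_mul_of_mem_of_notMem hz₂ hx₂
      exact ⟨hc, by rw [hs, card_insert_of_notMem hx₂]⟩
    · rw [swap_comm]
      obtain ⟨hc, hs⟩ := hC₂.swap_mul_of_mem_of_notMem (hxz.mpr hz₂) hz₂
      exact ⟨hc, by rw [hs, card_insert_of_notMem hz₂]⟩
  refine ⟨_, _, hD₁, by rw [hD₁s, card_insert_of_notMem hx], hD₂.1, hD₂.2, ?_⟩
  rw [mul_assoc, ← mul_assoc (swap x z), swap_mul_self, one_mul]

theorem IsProdOfTwoCycles.add (h : σ.IsProdOfTwoCycles l₁ l₂) {k : ℕ}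
    (h₁ : l₁ + k ≤ Fintype.card α) (h₂ : l₂ + k ≤ Fintype.card α) :
    σ.IsProdOfTwoCycles (l₁ + k) (l₂ + k) := by
  induction k with
  | zero => exact h
  | succ k ih => exact (ih (by omega) (by omega)).add_one (by omega) (by omega)

theorem isProdOfTwoCycles_one {l : ℕ} (h₂ : 2 ≤ l) (hl : l ≤ Fintype.card α) :
    (1 : Perm α).IsProdOfTwoCycles l l := by
  obtain ⟨s, -, hs⟩ := exists_subset_card_eq (hl.trans_eq card_univ.symm)
  have hlen : s.toList.length = l := by rw [Finset.length_toList, hs]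
  have hcyc := List.isCycle_formPerm s.nodup_toList (hlen ▸ h₂)
  have hcard : #s.toList.formPerm.support = l := by
    rw [List.card_support_formPerm s.nodup_toList (hlen ▸ h₂), hlen]
  exact ⟨_, _, hcyc, hcard, hcyc.inv, by rwa [support_inv], (mul_inv_cancel _).symm⟩

theorem IsCycle.isProdOfTwoCycles_card_support_add_one_two (hσ : σ.IsCycle)
    (h : #σ.support < Fintype.card α) : σ.IsProdOfTwoCycles (#σ.support + 1) 2 := by
  obtain ⟨x, -, hx⟩ := exists_mem_notMem_of_card_lt_card (h.trans_eq card_univ.symm)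
  obtain ⟨z, hz⟩ := hσ.nonempty_support
  have hxz : x ≠ z := by rintro rfl; exact hx hz
  obtain ⟨hc, hs⟩ := hσ.mul_swap_of_mem_of_notMem hz hx
  exact ⟨_, _, hc, by rw [hs, card_insert_of_notMem hx], isCycle_swap hxz, card_support_swap hxz,
    by rw [mul_assoc, swap_mul_self, mul_one]⟩

theorem Disjoint.isProdOfTwoCycles_two_add (hC₁ : C₁.IsCycle) (hC₂ : C₂.IsCycle)
    (hd : C₁.Disjoint C₂) : (C₁ * C₂).IsProdOfTwoCycles 2 (#C₁.support + #C₂.support) := by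
  obtain ⟨x, hx⟩ := hC₂.nonempty_support
  obtain ⟨y, hy⟩ := hC₁.nonempty_support
  have hds := disjoint_iff_disjoint_support.mp hd
  have hxy : x ≠ y := by rintro rfl; exact disjoint_left.mp hds hy hx
  obtain ⟨hc, hs⟩ := hC₂.swap_mul_mul_of_disjoint hC₁ hds.symm hx hy
  exact ⟨_, _, isCycle_swap hxy, card_support_swap hxy, hc,
    by rw [hs, card_union_of_disjoint hds.symm, add_comm], by simp [mul_assoc]⟩

theorem Disjoint.isProdOfTwoCycles_add_one (hC₁ : C₁.IsCycle) (hC₂ : C₂.IsCycle)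
    (hd : C₁.Disjoint C₂) :
    (C₁ * C₂).IsProdOfTwoCycles (#C₁.support + 1) (#C₂.support + 1) := by
  have hcard := card_union_of_disjoint (disjoint_iff_disjoint_support.mp hd) ▸
    card_le_univ (C₁.support ∪ C₂.support)
  have := hC₁.two_le_card_support
  have := hC₂.two_le_card_support
  exact IsProdOfTwoCycles.add_one ⟨C₁, C₂, hC₁, rfl, hC₂, rfl, rfl⟩ (by omega) (by omega)

theorem IsProdOfTwoCycles.mul_of_disjoint {τ γ : Perm α} (hτ : τ.IsProdOfTwoCycles l₁ l₂)
    (hc : τ.cycleFactorsFinset.Nonempty) (hsum : l₁ + l₂ = #τ.support + #τ.cycleFactorsFinset)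
    (hγ : γ.IsCycle) (hd : τ.Disjoint γ) :
    (τ * γ).IsProdOfTwoCycles (l₁ + 1) (l₂ + #γ.support) := by
  obtain ⟨D₁, D₂, hD₁, rfl, hD₂, rfl, rfl⟩ := hτ
  obtain ⟨x, hx⟩ : (D₁.support ∩ D₂.support).Nonempty := by
    rw [← not_disjoint_iff_nonempty_inter]
    intro hds
    have := (disjoint_iff_disjoint_support.mpr hds).card_support_mul
    have := hc.card_pos
    omega
  have hsub := support_union_subset_support_mul hD₁ hD₂ ⟨x, hx⟩ hsum
  rw [mem_inter] at hx
  obtain ⟨y, hy⟩ := hγ.nonempty_support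
  have hdγ := disjoint_iff_disjoint_support.mp hd
  have hy₁ : y ∉ D₁.support := fun h => disjoint_left.mp hdγ (hsub (mem_union_left _ h)) hy
  have hdγ₂ : _root_.Disjoint γ.support D₂.support :=
    disjoint_of_subset_right (subset_union_right.trans hsub) hdγ.symm
  obtain ⟨hC₁, hC₁s⟩ := hD₁.mul_swap_of_mem_of_notMem hx.1 hy₁
  obtain ⟨hC₂, hC₂s⟩ := hγ.swap_mul_mul_of_disjoint hD₂ hdγ₂ hy hx.2
  refine ⟨_, _, hC₁, by rw [hC₁s, card_insert_of_notMem hy₁], hC₂,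
    by rw [hC₂s, card_union_of_disjoint hdγ₂, add_comm], ?_⟩
  simp [mul_assoc]

theorem isProdOfTwoCycles_of_card_add_card_eq (σ : Perm α) (hc : σ.cycleFactorsFinset.Nonempty)
    (h₁ : 2 ≤ l₁) (h₂ : 2 ≤ l₂) (hsum : l₁ + l₂ = #σ.support + #σ.cycleFactorsFinset)
    (hd₁ : l₁ + #σ.cycleFactorsFinset ≤ l₂ + #σ.support)
    (hd₂ : l₂ + #σ.cycleFactorsFinset ≤ l₁ + #σ.support) : σ.IsProdOfTwoCycles l₁ l₂ := by
  induction hcard : #σ.cycleFactorsFinset generalizing σ l₁ l₂ with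
  | zero => exact absurd hcard hc.card_pos.ne'
  | succ c ih =>
    rcases Nat.eq_zero_or_pos c with rfl | hc₀
    · obtain ⟨γ, hγ⟩ := card_eq_one.mp hcard
      exact (cycleFactorsFinset_eq_singleton_iff.mp hγ).1.isProdOfTwoCycles h₁ h₂ (by omega)
    wlog hle : l₁ ≤ l₂ generalizing l₁ l₂
    · exact (this h₂ h₁ (by omega) hd₂ hd₁ (by omega)).symm
    obtain ⟨γ, hγ, hmin⟩ := exists_min_image σ.cycleFactorsFinset (fun g => #g.support) hc
    have hγc := (mem_cycleFactorsFinset_iff.mp hγ).1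
    have hp := hγc.two_le_card_support
    have hm := card_cycleFactorsFinset_mul_le_card_support hmin
    rw [hcard, add_one_mul] at hm
    have hcp := Nat.le_mul_of_pos_left #γ.support hc₀
    by_cases hedge : l₁ = 2 ∨ l₂ ≤ #γ.support + 1
    · -- either edge forces `σ` to consist of two cycles
      obtain rfl : c = 1 := by omega
      obtain ⟨a, ha, b, hb, hac, hbc, hd, rfl⟩ :=
        exists_eq_mul_of_card_cycleFactorsFinset_eq_two hcard
      have hsupp := hd.card_support_mul
      rcases hedge with rfl | hl₂
      · convert Disjoint.isProdOfTwoCycles_two_add hac hbc hd using 2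
        omega
      · have := hmin a ha
        have := hmin b hb
        convert Disjoint.isProdOfTwoCycles_add_one hac hbc hd using 2 <;> omega
    set τ := σ * γ⁻¹
    have hdτ : τ.Disjoint γ := disjoint_mul_inv_of_mem_cycleFactorsFinset hγ
    have hστ : σ = τ * γ := (inv_mul_cancel_right σ γ).symm
    have hτcard : #τ.cycleFactorsFinset = c := by
      rw [cycleFactorsFinset_mul_inv_mem_eq_sdiff hγ, sdiff_singleton_eq_erase,
        card_erase_of_mem hγ, hcard, Nat.add_sub_cancel]
    have hτsupp : #σ.support = #τ.support + #γ.support := by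
      conv_lhs => rw [hστ]
      exact hdτ.card_support_mul
    -- from `(c - 1) * (#γ.support - 1) ≥ 0`; it keeps `(l₁ - 1, l₂ - #γ.support)` admissible
    have hcp' : c + #γ.support ≤ c * #γ.support + 1 := by nlinarith
    have hτc : τ.cycleFactorsFinset.Nonempty := by rw [← card_pos, hτcard]; exact hc₀
    have hτprod := ih τ hτc (l₁ := l₁ - 1) (l₂ := l₂ - #γ.support) (by omega) (by omega)
      (by omega) (by omega) (by omega) hτcard
    rw [hστ]
    convert hτprod.mul_of_disjoint hτc (by omega) hγc hdτ using 2 <;> omega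

theorem isProdOfTwoCycles_of_card_add_card_eq_add_two_mul {s : ℕ}
    (hl₁ : l₁ ≤ Fintype.card α) (h₂ : 2 ≤ l₂) (hle : l₂ ≤ l₁)
    (hsum : l₁ + l₂ = #σ.support + #σ.cycleFactorsFinset + 2 * s)
    (hd : l₁ + #σ.cycleFactorsFinset ≤ l₂ + #σ.support) : σ.IsProdOfTwoCycles l₁ l₂ := by
  have hcm : #σ.cycleFactorsFinset * 2 ≤ #σ.support :=
    card_cycleFactorsFinset_mul_le_card_support fun γ hγ =>
      (mem_cycleFactorsFinset_iff.mp hγ).1.two_le_card_support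
  obtain hc | hc := σ.cycleFactorsFinset.eq_empty_or_nonempty
  · obtain rfl := cycleFactorsFinset_eq_empty_iff.mp hc
    rw [support_one, card_empty] at hd
    obtain rfl : l₁ = l₂ := by omega
    exact isProdOfTwoCycles_one h₂ hl₁
  by_cases hs : s + 2 ≤ l₂
  · have htight := isProdOfTwoCycles_of_card_add_card_eq σ hc (l₁ := l₁ - s) (l₂ := l₂ - s)
      (by omega) (by omega) (by omega) (by omega) (by omega)
    convert htight.add (k := s) (by omega) (by omega) using 2 <;> omega
  -- otherwise `σ` is a single cycle and `(l₁, l₂) = (#σ.support + s, s + 1)`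
  have hc₁ : #σ.cycleFactorsFinset = 1 := by have := hc.card_pos; omega
  obtain ⟨γ, hγ⟩ := card_eq_one.mp hc₁
  have hσ := (cycleFactorsFinset_eq_singleton_iff.mp hγ).1
  convert (hσ.isProdOfTwoCycles_card_support_add_one_two (by omega)).add (k := s - 1)
    (by omega) (by omega) using 2 <;> omega

end Equiv.Perm

theorem product_of_two_cycles_iff (n l₁ l₂ : ℕ) (σ : Equiv.Perm (Fin n))
    (h1 : l₁ ≤ n) (h2 : l₂ ≤ l₁) (h3 : 2 ≤ l₂) :
    (∃ C₁ C₂ : Equiv.Perm (Fin n),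
        C₁.IsCycle ∧ C₁.support.card = l₁ ∧ C₂.IsCycle ∧ C₂.support.card = l₂ ∧
        σ = C₁ * C₂) ↔
      (σ.cycleFactorsFinset.card = 2 ∧
        (∃ c₁ ∈ σ.cycleFactorsFinset, ∃ c₂ ∈ σ.cycleFactorsFinset,
          c₁ ≠ c₂ ∧ c₁.support.card = l₁ ∧ c₂.support.card = l₂) ∧
        l₁ + l₂ = σ.support.card) ∨
      ((∃ s : ℕ, l₁ + l₂ = σ.support.card + σ.cycleFactorsFinset.card + 2 * s) ∧
        l₁ - l₂ ≤ σ.support.card - σ.cycleFactorsFinset.card) := by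
  constructor
  · rintro ⟨C₁, C₂, hC₁, rfl, hC₂, rfl, rfl⟩
    by_cases hds : _root_.Disjoint C₁.support C₂.support
    · have hd := disjoint_iff_disjoint_support.mpr hds
      have hne : C₁ ≠ C₂ := fun h => hC₁.ne_one (disjoint_refl_iff.mp (h ▸ hd))
      have hcff : (C₁ * C₂).cycleFactorsFinset = {C₁, C₂} := by
        rw [hd.cycleFactorsFinset_mul_eq_union, hC₁.cycleFactorsFinset_eq_singleton,
          hC₂.cycleFactorsFinset_eq_singleton]
        rfl
      exact .inl ⟨by rw [hcff, card_pair hne],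
        ⟨C₁, by simp [hcff], C₂, by simp [hcff], hne, rfl, rfl⟩, hd.card_support_mul.symm⟩
    · have hov := not_disjoint_iff_nonempty_inter.mp hds
      obtain ⟨hle₁, hle₂⟩ := card_support_add_card_cycleFactorsFinset_le_mul hC₁ hC₂ hov
      obtain ⟨k, hk⟩ := even_card_support_add_card_cycleFactorsFinset_add hC₁ hC₂
      exact .inr ⟨⟨k - (#(C₁ * C₂).support + #(C₁ * C₂).cycleFactorsFinset), by omega⟩, by omega⟩
  · rintro (⟨hc, ⟨c₁, hc₁, c₂, hc₂, hne, rfl, rfl⟩, -⟩ | ⟨⟨s, hs⟩, hd⟩)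
    · exact ⟨c₁, c₂, (mem_cycleFactorsFinset_iff.mp hc₁).1, rfl,
        (mem_cycleFactorsFinset_iff.mp hc₂).1, rfl,
        eq_mul_of_card_cycleFactorsFinset_eq_two hc hc₁ hc₂ hne⟩
    · -- `hd` subtracts in `ℕ`; with `2 * n_σ ≤ m_σ` it reads `l₁ + n_σ ≤ l₂ + m_σ`
      have hcm := card_cycleFactorsFinset_mul_le_card_support (σ := σ) (k := 2) fun γ hγ =>
        (mem_cycleFactorsFinset_iff.mp hγ).1.two_le_card_support
      exact isProdOfTwoCycles_of_card_add_card_eq_add_two_mul (by rwa [Fintype.card_fin]) h3 h2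
        hs (by omega)
end

section
/- Let k ≥ 4 be even and set n = 4k. Suppose σ ∈ A_n satisfies n_σ ≥ k + 2. Then there exist ε ∈ {0,1} and even permutations φ, τ ∈ S_n with disjoint supports such that σ = φτ, |supp(φ)| ≤ 4(k−2) − ε, and |supp(τ)| ≤ 8 + ε. -/
open Equiv

/-!
The `k + 2` or more cycles of `σ` have lengths at least `2` summing to at most `4 * k`, so short
cycles abound: `σ` has four transpositions, three `3`-cycles, two `4`-cycles, or one cycle each of
lengths `2`, `3`, `4`. Each such collection has total length `8 + ε` with `ε ≤ 1` and an even
product `τ`; the remaining cycle factors of `σ` multiply to `φ`.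
-/

open Finset

namespace Finset

variable {ι : Type*} (s : Finset ι) (w : ι → ℕ)

lemma five_mul_card_le_sum_add_card_filter (hw : ∀ i ∈ s, 2 ≤ w i) :
    5 * #s ≤ ∑ i ∈ s, w i + 3 * #{i ∈ s | w i = 2} + 2 * #{i ∈ s | w i = 3} +
      #{i ∈ s | w i = 4} := by
  rw [card_filter, card_filter, card_filter, card_eq_sum_ones, mul_sum, mul_sum, mul_sum,
    ← sum_add_distrib, ← sum_add_distrib, ← sum_add_distrib]
  refine sum_le_sum fun i hi => ?_
  have := hw i hi
  split_ifs <;> omega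

lemma exists_subset_sum_eq_of_le_card_filter {j m : ℕ} (hm : m ≤ #{i ∈ s | w i = j}) :
    ∃ t ⊆ s, ∑ i ∈ t, w i = m * j ∧ ∑ i ∈ t, (w i + 1) = m * (j + 1) := by
  obtain ⟨t, hts, rfl⟩ := exists_subset_card_eq hm
  have hw : ∀ i ∈ t, w i = j := fun i hi => (mem_filter.mp (hts hi)).2
  exact ⟨t, hts.trans (filter_subset _ _), sum_const_nat hw,
    sum_const_nat fun i hi => by rw [hw i hi]⟩

lemma exists_subset_sum_eq_eight_add [DecidableEq ι] (hw : ∀ i ∈ s, 2 ≤ w i) {k : ℕ} (hk : 4 ≤ k)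
    (hcard : k + 2 ≤ #s) (hsum : ∑ i ∈ s, w i ≤ 4 * k) :
    ∃ t ⊆ s, ∃ ε ≤ 1, ∑ i ∈ t, w i = 8 + ε ∧ Even (∑ i ∈ t, (w i + 1)) := by
  have hbound := five_mul_card_le_sum_add_card_filter s w hw
  -- Otherwise `3 a + 2 b + c ≤ 13` for the numbers `a, b, c` of parts of size `2, 3, 4`,
  -- whereas `hbound` gives `k + 10 ≤ 3 a + 2 b + c`.
  have hcases : 4 ≤ #{i ∈ s | w i = 2} ∨ 3 ≤ #{i ∈ s | w i = 3} ∨ 2 ≤ #{i ∈ s | w i = 4} ∨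
      (0 < #{i ∈ s | w i = 2} ∧ 0 < #{i ∈ s | w i = 3} ∧ 0 < #{i ∈ s | w i = 4}) := by
    omega
  rcases hcases with h | h | h | ⟨h₂, h₃, h₄⟩
  · obtain ⟨t, hts, hsum, hpar⟩ := exists_subset_sum_eq_of_le_card_filter s w h
    exact ⟨t, hts, 0, zero_le_one, hsum, hpar ▸ by decide⟩
  · obtain ⟨t, hts, hsum, hpar⟩ := exists_subset_sum_eq_of_le_card_filter s w h
    exact ⟨t, hts, 1, le_rfl, hsum, hpar ▸ by decide⟩
  · obtain ⟨t, hts, hsum, hpar⟩ := exists_subset_sum_eq_of_le_card_filter s w h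
    exact ⟨t, hts, 0, zero_le_one, hsum, hpar ▸ by decide⟩
  · obtain ⟨a, ha⟩ := card_pos.mp h₂
    obtain ⟨b, hb⟩ := card_pos.mp h₃
    obtain ⟨c, hc⟩ := card_pos.mp h₄
    simp only [mem_filter] at ha hb hc
    have hab : a ≠ b := fun h => by simp_all
    have hac : a ≠ c := fun h => by simp_all
    have hbc : b ≠ c := fun h => by simp_all
    refine ⟨{a, b, c}, by simp [insert_subset_iff, ha.1, hb.1, hc.1], 1, le_rfl, ?_, ?_⟩ <;>
      simp [sum_insert, hab, hac, hbc, ha.2, hb.2, hc.2, Nat.even_iff]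

end Finset

namespace Equiv.Perm

variable {α : Type*} [DecidableEq α] [Fintype α]

lemma sum_card_support_cycleFactorsFinset (σ : Perm α) :
    ∑ c ∈ σ.cycleFactorsFinset, #c.support = #σ.support := by
  rw [← sum_cycleType, cycleType_def]
  rfl

lemma exists_disjoint_mul_cycleType_eq {σ : Perm α} {T : Finset (Perm α)}
    (hT : T ⊆ σ.cycleFactorsFinset) :
    ∃ φ τ : Perm α, φ.Disjoint τ ∧ σ = φ * τ ∧ τ.cycleType = T.val.map (card ∘ support) := by
  have hdisj := σ.cycleFactorsFinset_pairwise_disjoint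
  have hdT : (T : Set (Perm α)).Pairwise Disjoint := hdisj.mono (coe_subset.mpr hT)
  have hdR : ((σ.cycleFactorsFinset \ T : Finset (Perm α)) : Set (Perm α)).Pairwise Disjoint :=
    hdisj.mono (coe_subset.mpr sdiff_subset)
  set τ := T.noncommProd id (hdT.imp fun _ _ => Disjoint.commute)
  set φ := (σ.cycleFactorsFinset \ T).noncommProd id (hdR.imp fun _ _ => Disjoint.commute)
  refine ⟨φ, τ, ?_, ?_, cycleType_eq' T (fun c hc => (mem_cycleFactorsFinset_iff.mp (hT hc)).1)
    hdT rfl⟩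
  · refine disjoint_noncommProd_right _ fun c hc => Disjoint.symm ?_
    refine disjoint_noncommProd_right _ fun d hd => ?_
    have hd' := mem_sdiff.mp hd
    exact hdisj (hT hc) hd'.1 fun h => hd'.2 (by subst h; exact hc)
  · have hcomm := σ.cycleFactorsFinset_mem_commute
    rw [← sdiff_union_of_subset hT] at hcomm
    calc σ = σ.cycleFactorsFinset.noncommProd id σ.cycleFactorsFinset_mem_commute :=
          (cycleFactorsFinset_noncommProd _).symm
      _ = (σ.cycleFactorsFinset \ T ∪ T).noncommProd id hcomm :=
          noncommProd_congr (sdiff_union_of_subset hT).symm (fun _ _ => rfl) _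
      _ = φ * τ := noncommProd_union_of_disjoint sdiff_disjoint _ _

end Equiv.Perm

open Equiv.Perm in
theorem n_k_6_lemma2_general (k : ℕ) (hk : 4 ≤ k)
    (σ : Equiv.Perm (Fin (4 * k))) (hσ : σ ∈ alternatingGroup (Fin (4 * k)))
    (hns : k + 2 ≤ σ.cycleFactorsFinset.card) :
    ∃ (ε : ℕ) (φ τ : Equiv.Perm (Fin (4 * k))), ε ≤ 1 ∧
      φ ∈ alternatingGroup (Fin (4 * k)) ∧ τ ∈ alternatingGroup (Fin (4 * k)) ∧
      φ.Disjoint τ ∧ σ = φ * τ ∧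
      φ.support.card ≤ 4 * (k - 2) - ε ∧ τ.support.card ≤ 8 + ε := by
  have hσcard : #σ.support ≤ 4 * k := (card_le_univ _).trans_eq (Fintype.card_fin _)
  obtain ⟨T, hT, ε, hε, hsum, hpar⟩ := exists_subset_sum_eq_eight_add σ.cycleFactorsFinset
    (fun c => #c.support) (fun c hc => (mem_cycleFactorsFinset_iff.mp hc).1.two_le_card_support)
    hk hns (σ.sum_card_support_cycleFactorsFinset ▸ hσcard)
  obtain ⟨φ, τ, hdisj, hστ, hτ⟩ := exists_disjoint_mul_cycleType_eq hT
  have hτcard : #τ.support = 8 + ε := by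
    rw [← sum_cycleType, hτ, ← hsum]
    rfl
  have hτsign : sign τ = 1 := by
    have hexp : τ.cycleType.sum + Multiset.card τ.cycleType = ∑ c ∈ T, (#c.support + 1) := by
      rw [hτ, Multiset.card_map, sum_add_distrib, ← card_eq_sum_ones]
      rfl
    rw [sign_of_cycleType, hexp, hpar.neg_one_pow]
  have hφsign : sign φ = 1 := by
    simpa [hστ, hτsign] using hσ
  have hφcard := hστ ▸ hdisj.card_support_mul
  refine ⟨ε, φ, τ, hε, hφsign, hτsign, hdisj, hστ, by omega, hτcard.le⟩

theorem n_k_6_lemma2 (k : ℕ) (hk : 4 ≤ k) (hke : Even k)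
    (σ : Equiv.Perm (Fin (4 * k))) (hσ : σ ∈ alternatingGroup (Fin (4 * k)))
    (hns : k + 2 ≤ σ.cycleFactorsFinset.card) :
    ∃ (ε : ℕ) (φ τ : Equiv.Perm (Fin (4 * k))), ε ≤ 1 ∧
      φ ∈ alternatingGroup (Fin (4 * k)) ∧ τ ∈ alternatingGroup (Fin (4 * k)) ∧
      φ.Disjoint τ ∧ σ = φ * τ ∧
      φ.support.card ≤ 4 * (k - 2) - ε ∧ τ.support.card ≤ 8 + ε :=
  n_k_6_lemma2_general k hk σ hσ hns
end
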